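/- arXiv:1809.02092 — 2 statements merged into one kernel-verified Lean document; each statement's English description precedes it below -/
import Mathlib

section
/- Let η be a curve in H from 0 to ∞ whose trace has zero two-dimensional Lebesgue measure, let φ : H → H be a homeomorphism which is conformal on H \ η, and assume that the intersection of φ(η) with every bounded set has zero two-dimensional Lebesgue measure. Then for every compact set K ⊆ H, the derivative φ′ (which is defined Lebesgue-almost everywhere on K, namely on K \ η) is integrable on K: ∫_{K \ η} |φ′(w)| dA(w) < ∞. -/
open Set Metric MeasureTheory Filter Complex

noncomputable section

/-- The open upper half-plane `H`. -/
def UHP : Set ℂ := {z : ℂ | 0 < z.im}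

/-- A curve in `H` from `0` to `∞`: a continuous map `[0,∞) → closure H` with
`η 0 = 0` and `η t → ∞` as `t → ∞`. -/
def IsCurve (η : ℝ → ℂ) : Prop :=
  ContinuousOn η (Ici 0) ∧ η 0 = 0 ∧ (∀ t, 0 ≤ t → 0 ≤ (η t).im) ∧
    Tendsto (fun t => ‖η t‖) atTop atTop

/-- The trace of a curve defined on `[0, ∞)`. -/
def curveTrace (η : ℝ → ℂ) : Set ℂ := η '' Ici 0

/-- `[σ, τ]` is (the time interval of) an excursion of `η` between `∂B(z,r)` and
`∂B(z,R)`: there is `t ∈ (σ,τ)` with `η t ∈ B(z,r)`, `σ` is the last time before `t`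
at which `dist (η s) z = R` and `τ` is the first such time after `t`. -/
def IsExcursion (η : ℝ → ℂ) (z : ℂ) (r R σ τ : ℝ) : Prop :=
  0 ≤ σ ∧ σ < τ ∧ dist (η σ) z = R ∧ dist (η τ) z = R ∧
    (∀ s, σ < s → s < τ → dist (η s) z ≠ R) ∧
    ∃ t, σ < t ∧ t < τ ∧ dist (η t) z < r

/-- The set of (time intervals of) excursions of `η` between `∂B(z,r)` and `∂B(z,R)`. -/
def excursionSet (η : ℝ → ℂ) (z : ℂ) (r R : ℝ) : Set (ℝ × ℝ) :=
  {p : ℝ × ℝ | IsExcursion η z r R p.1 p.2}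

/-- The last time in `[0, t]` at which `η` hits `∂B(η t, δ)` (this is `0` if there
is no such time). -/
def excStart (η : ℝ → ℂ) (t δ : ℝ) : ℝ :=
  sSup {s : ℝ | 0 ≤ s ∧ s ≤ t ∧ dist (η s) (η t) = δ}

/-- The first time after `t` at which `η` hits `∂B(η t, δ)`. -/
def excEnd (η : ℝ → ℂ) (t δ : ℝ) : ℝ :=
  sInf {s : ℝ | t ≤ s ∧ dist (η s) (η t) = δ}

/-- The trace of the excursion `η(t; δ)`. -/
def excAt (η : ℝ → ℂ) (t δ : ℝ) : Set ℂ :=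
  η '' Icc (excStart η t δ) (excEnd η t δ)

/-- `K` is a (nondegenerate) compact axis-parallel rectangle. -/
def IsRect (K : Set ℂ) : Prop :=
  ∃ a₁ a₂ b₁ b₂ : ℝ, a₁ < a₂ ∧ b₁ < b₂ ∧
    K = {z : ℂ | z.re ∈ Icc a₁ a₂ ∧ z.im ∈ Icc b₁ b₂}

/-- Hypothesis (H1): bounded number of crossings. -/
def HypH1 (η : ℝ → ℂ) : Prop :=
  ∀ K : Set ℂ, IsRect K → K ⊆ UHP → ∀ β : ℝ, 0 < β → β < 1 →
    ∃ M : ℝ, 0 < M ∧ ∃ ε₀ : ℝ, 0 < ε₀ ∧ ∀ ε : ℝ, 0 < ε → ε < ε₀ → ∀ z ∈ K,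
      (excursionSet η z ε (ε ^ β)).Finite ∧
        ((excursionSet η z ε (ε ^ β)).ncard : ℝ) ≤ M

/-- Hypothesis (H2): non-self-tracing. -/
def HypH2 (η : ℝ → ℂ) : Prop :=
  ∀ K : Set ℂ, IsRect K → K ⊆ UHP → ∀ α ξ : ℝ, 1 < ξ → ξ < α →
    ∃ δ₀ : ℝ, 0 < δ₀ ∧ ∀ δ : ℝ, 0 < δ → δ < δ₀ → ∀ t : ℝ, 0 < t → η t ∈ K →
      ∃ y : ℂ,
        ball y (δ ^ α) ⊆ ball (η t) δ \ curveTrace η ∧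
        (ball y (2 * δ ^ α) ∩ curveTrace η).Nonempty ∧
        ∀ a ∈ frontier (connectedComponentIn (ball (η t) δ \ curveTrace η) y) \ excAt η t δ,
          ∀ γ : ℝ → ℂ, ContinuousOn γ (Icc 0 1) → γ 0 = y → γ 1 = a →
            (∀ s ∈ Icc (0:ℝ) 1,
              γ s ∈ connectedComponentIn (ball (η t) δ \ curveTrace η) y ∪ {a}) →
            ∃ s ∈ Icc (0:ℝ) 1, γ s ∉ ball y (δ ^ ξ)

/-- `A` has upper Minkowski dimension at most `d`: the intersection of `A` with any
bounded set can, for every `d' > d`, be covered by `O(r^{-d'})` balls of radius `r`. -/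
def UpperMinkDimLE (A : Set ℂ) (d : ℝ) : Prop :=
  ∀ B : Set ℂ, Bornology.IsBounded B → ∀ d' : ℝ, d < d' →
    ∃ C : ℝ, 0 < C ∧ ∃ r₀ : ℝ, 0 < r₀ ∧ ∀ r : ℝ, 0 < r → r < r₀ →
      ∃ F : Finset ℂ, (A ∩ B ⊆ ⋃ x ∈ F, ball x r) ∧ (F.card : ℝ) ≤ C * r ^ (-d')

/-- `φ : H → H` is a homeomorphism (with inverse `ψ`) which is conformal
(holomorphic) off the trace of `η`. -/
def ConformalOffTrace (φ ψ : ℂ → ℂ) (η : ℝ → ℂ) : Prop :=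
  MapsTo φ UHP UHP ∧ MapsTo ψ UHP UHP ∧ ContinuousOn φ UHP ∧ ContinuousOn ψ UHP ∧
    InvOn ψ φ UHP UHP ∧ DifferentiableOn ℂ φ (UHP \ curveTrace η)

/-- `tη` is the image curve `φ(η)`: a curve in `H` from `0` to `∞` agreeing with
`φ ∘ η` whenever `η` is in `H`. -/
def IsImageCurve (φ : ℂ → ℂ) (η tη : ℝ → ℂ) : Prop :=
  IsCurve tη ∧ ∀ t, 0 ≤ t → η t ∈ UHP → tη t = φ (η t)

/-- `η` is non-self-crossing: on every compact time interval it is a uniform limit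
of simple curves. -/
def NonSelfCrossing (η : ℝ → ℂ) : Prop :=
  ∀ T : ℝ, 0 < T → ∀ ε : ℝ, 0 < ε → ∃ γ : ℝ → ℂ,
    ContinuousOn γ (Icc 0 T) ∧ InjOn γ (Icc 0 T) ∧
      ∀ t ∈ Icc (0:ℝ) T, dist (γ t) (η t) < ε

/-- The diameter `diam (φ (e))` of the `φ`-image of the trace of the excursion
with time interval `p`. -/
def excDiam (η : ℝ → ℂ) (φ : ℂ → ℂ) (p : ℝ × ℝ) : ℝ :=
  Metric.diam (φ '' (η '' Icc p.1 p.2))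

/-- `δ̂`, the maximum of the diameters of the `φ`-images of the excursions of `η`
between `∂B(z,r)` and `∂B(z,R)`. -/
def maxExcDiam (η : ℝ → ℂ) (φ : ℂ → ℂ) (z : ℂ) (r R : ℝ) : ℝ :=
  sSup (excDiam η φ '' excursionSet η z r R)

/-- `Σᵢ δᵢ`, the sum of the diameters of the `φ`-images of the excursions of `η`
between `∂B(z,r)` and `∂B(z,R)`. -/
def sumExcDiam (η : ℝ → ℂ) (φ : ℂ → ℂ) (z : ℂ) (r R : ℝ) : ℝ :=
  ∑ᶠ p ∈ excursionSet η z r R, excDiam η φ p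

/-- The open arc `A(e, w, r, y)`: the relative interior (in the circle `∂B(w,r)`)
of the closed arc `∂B(w,r) ∩ ∂O'`, where `O'` is the connected component of
`B(w,r) \ e` containing `y`. -/
def arcA (e : Set ℂ) (w : ℂ) (r : ℝ) (y : ℂ) : Set ℂ :=
  {x : ℂ | x ∈ sphere w r ∧ ∃ ε : ℝ, 0 < ε ∧ ∀ x' ∈ sphere w r, dist x' x < ε →
    x' ∈ frontier (connectedComponentIn (ball w r \ e) y)}

/-- `f` is absolutely continuous on the interval `[u, v]`. -/
def AbsContOnInterval (f : ℝ → ℂ) (u v : ℝ) : Prop :=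
  ∀ ε : ℝ, 0 < ε → ∃ δ : ℝ, 0 < δ ∧ ∀ n : ℕ, ∀ x y : Fin n → ℝ,
    (∀ j, x j ∈ Icc u v ∧ y j ∈ Icc u v ∧ x j ≤ y j) →
    (∀ i j, i ≠ j → Disjoint (Ioo (x i) (y i)) (Ioo (x j) (y j))) →
    (∑ j, (y j - x j)) < δ → (∑ j, ‖f (y j) - f (x j)‖) < ε

/-!
The area formula for the injective map `φ` on `s = K \ η`, where `φ` is holomorphic, gives
`∫_s |φ'|² dA = |φ(s)| ≤ |φ(K)| < ∞`; since `s` has finite area, `φ' ∈ L²(s) ⊆ L¹(s)`.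
-/

open scoped ENNReal

theorem isClosed_image_Ici_of_tendsto_norm {E : Type*} [NormedAddCommGroup E]
    {η : ℝ → E} {a : ℝ} (hc : ContinuousOn η (Ici a))
    (h : Tendsto (fun t => ‖η t‖) atTop atTop) : IsClosed (η '' Ici a) := by
  refine isClosed_of_closure_subset fun x hx => ?_
  obtain ⟨T, hT⟩ := eventually_atTop.mp (h.eventually_ge_atTop (‖x‖ + 1))
  have hsplit : η '' Ici a = η '' Icc a (max T a) ∪ η '' Ici (max T a) := by
    rw [← image_union, Icc_union_Ici_eq_Ici (le_max_right T a)]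
  have htail : closure (η '' Ici (max T a)) ⊆ {z | ‖x‖ + 1 ≤ ‖z‖} := by
    refine closure_minimal ?_ (isClosed_le continuous_const continuous_norm)
    rintro _ ⟨t, ht, rfl⟩
    exact hT t ((le_max_left T a).trans ht)
  rw [hsplit, closure_union] at hx
  rcases hx with hx | hx
  · have hcpt : IsCompact (η '' Icc a (max T a)) :=
      isCompact_Icc.image_of_continuousOn (hc.mono Icc_subset_Ici_self)
    exact image_mono Icc_subset_Ici_self (hcpt.isClosed.closure_subset hx)
  · have : ‖x‖ + 1 ≤ ‖x‖ := htail hx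
    linarith

theorem IsCurve.isClosed_curveTrace {η : ℝ → ℂ} (hη : IsCurve η) :
    IsClosed (curveTrace η) :=
  isClosed_image_Ici_of_tendsto_norm hη.1 hη.2.2.2

theorem det_restrictScalars_smulRight_one (c : ℂ) :
    (((1 : ℂ →L[ℂ] ℂ).smulRight c).restrictScalars ℝ).det = normSq c := by
  have h : ((((1 : ℂ →L[ℂ] ℂ).smulRight c).restrictScalars ℝ : ℂ →L[ℝ] ℂ) : ℂ →ₗ[ℝ] ℂ)
      = Algebra.lmul ℝ ℂ c := by
    ext z
    simp [mul_comm]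
  rw [ContinuousLinearMap.det, h, ← Algebra.norm_apply, Algebra.norm_complex_apply]

theorem lintegral_enorm_deriv_sq_eq_volume_image {φ : ℂ → ℂ} {s : Set ℂ}
    (hs : MeasurableSet s) (hd : ∀ x ∈ s, DifferentiableAt ℂ φ x) (hinj : InjOn φ s) :
    ∫⁻ x in s, ‖deriv φ x‖ₑ ^ 2 = volume (φ '' s) := by
  have hf' : ∀ x ∈ s, HasFDerivWithinAt φ
      (((1 : ℂ →L[ℂ] ℂ).smulRight (deriv φ x)).restrictScalars ℝ) s x := fun x hx =>
    ((hd x hx).hasDerivAt.hasFDerivAt.restrictScalars ℝ).hasFDerivWithinAt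
  rw [← lintegral_abs_det_fderiv_eq_addHaar_image volume hs hf' hinj]
  refine lintegral_congr fun x => ?_
  rw [det_restrictScalars_smulRight_one, abs_of_nonneg (normSq_nonneg _), ← Complex.sq_norm,
    ENNReal.ofReal_pow (norm_nonneg _), ofReal_norm]

theorem integrableOn_deriv_of_injOn {φ : ℂ → ℂ} {s : Set ℂ}
    (hs : MeasurableSet s) (hd : ∀ x ∈ s, DifferentiableAt ℂ φ x) (hinj : InjOn φ s)
    (hs_fin : volume s ≠ ∞) (himage_fin : volume (φ '' s) ≠ ∞) :
    IntegrableOn (deriv φ) s := by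
  have : IsFiniteMeasure (volume.restrict s) := isFiniteMeasure_restrict.mpr hs_fin
  have hmeas : AEStronglyMeasurable (deriv φ) (volume.restrict s) :=
    (measurable_deriv φ).aestronglyMeasurable
  have hL2 : MemLp (deriv φ) 2 (volume.restrict s) := by
    refine (memLp_two_iff_integrable_sq_norm hmeas).mpr ⟨hmeas.norm.pow 2, ?_⟩
    rw [hasFiniteIntegral_iff_enorm]
    simpa [enorm_pow, lintegral_enorm_deriv_sq_eq_volume_image hs hd hinj]
      using himage_fin.lt_top
  exact hL2.integrable one_le_two

theorem statement2_general
    (η : ℝ → ℂ) (φ ψ : ℂ → ℂ)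
    (hη : IsCurve η)
    (hφ : ConformalOffTrace φ ψ η)
    (K : Set ℂ) (hK : IsCompact K) (hKH : K ⊆ UHP) :
    IntegrableOn (fun w => deriv φ w) (K \ curveTrace η) volume := by
  obtain ⟨-, -, hcont, -, hinv, hdiff⟩ := hφ
  have hclosed := hη.isClosed_curveTrace
  have hopen : IsOpen (UHP \ curveTrace η) :=
    (isOpen_lt continuous_const continuous_im).sdiff hclosed
  have hsub : K \ curveTrace η ⊆ UHP \ curveTrace η := sdiff_subset_sdiff_left hKH
  refine integrableOn_deriv_of_injOn (hK.measurableSet.diff hclosed.measurableSet)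
    (fun x hx => hdiff.differentiableAt (hopen.mem_nhds (hsub hx)))
    (hinv.1.injOn.mono (hsub.trans sdiff_subset)) ?_ ?_
  · exact ((measure_mono sdiff_subset).trans_lt hK.measure_lt_top).ne
  · exact ((measure_mono (image_mono sdiff_subset)).trans_lt
      (hK.image_of_continuousOn (hcont.mono hKH)).measure_lt_top).ne

/-- If `η` is a curve in `H` from `0` to `∞` with trace of zero
Lebesgue measure, `φ : H → H` is a homeomorphism conformal off `η`, and `φ(η)` has
zero Lebesgue measure in every bounded set, then `φ'` is integrable on every compact
`K ⊆ H` (it is defined a.e. on `K`, namely on `K \ η`). -/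
theorem statement2
    (η : ℝ → ℂ) (φ ψ : ℂ → ℂ)
    (hη : IsCurve η) (hmeas : volume (curveTrace η) = 0)
    (hφ : ConformalOffTrace φ ψ η)
    (himg : ∀ B : Set ℂ, Bornology.IsBounded B →
      volume (φ '' (curveTrace η ∩ UHP) ∩ B) = 0)
    (K : Set ℂ) (hK : IsCompact K) (hKH : K ⊆ UHP) :
    IntegrableOn (fun w => deriv φ w) (K \ curveTrace η) volume :=
  statement2_general η φ ψ hη hφ K hK hKH
end
end

section
/- Let K = [a₁,a₂] × [b₁,b₂] be a compact rectangle in ℂ (with a₁ < a₂ and b₁ < b₂), let η ⊆ ℂ be any set, and let φ be any function defined on a neighborhood of K with values in ℂ. For n ∈ ℕ, set α_n = (a₂−a₁)/n and β_n = (b₁ subtracted from b₂)/n, i.e. β_n = (b₂−b₁)/n, and for 1 ≤ u,v ≤ n let R_{u,v} be the closed rectangle [a₁+(u−1)α_n, a₁+uα_n] × [b₁+(v−1)β_n, b₁+vβ_n]. Then (1/n) Σ_{u=1}^n Σ_{v=1}^n diam(φ(R_{u,v})) · 1{η ∩ R_{u,v} ≠ ∅} ≤ n · (1/area(K)) ∫_K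 diam(φ(B(z, α_n+β_n))) · 1{dist(z,η) < α_n+β_n} dA(z), provided B(z, α_n+β_n) is contained in the domain of φ for every z ∈ K. -/
open Set Metric MeasureTheory Filter Complex

noncomputable section

/-!
The open interiors of the cells `R_{u,v}` are pairwise disjoint subsets of `K` of area `αₙ βₙ`,
and every point of `R_{u,v}` is at distance `< αₙ + βₙ` from every point of its interior. So on
that interior the integrand dominates the `(u,v)`-th summand, whence `αₙ βₙ Σ ≤ ∫_K`, and
`area K = n² αₙ βₙ`.
-/

open scoped ENNReal

namespace Complex

theorem volume_reProdIm {s t : Set ℝ} (hs : MeasurableSet s) (ht : MeasurableSet t) :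
    volume (s ×ℂ t) = volume s * volume t := by
  have h : s ×ℂ t = measurableEquivRealProd ⁻¹' (s ×ˢ t) := rfl
  rw [h, volume_preserving_equiv_real_prod.measure_preimage (hs.prod ht).nullMeasurableSet,
    Measure.volume_eq_prod, Measure.prod_prod]

theorem measurableSet_reProdIm {s t : Set ℝ} (hs : MeasurableSet s) (ht : MeasurableSet t) :
    MeasurableSet (s ×ℂ t) :=
  (measurable_re hs).inter (measurable_im ht)

theorem disjoint_reProdIm {s s' t t' : Set ℝ} (h : Disjoint s s' ∨ Disjoint t t') :
    Disjoint (s ×ℂ t) (s' ×ℂ t') := by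
  rcases h with h | h
  · exact (h.preimage re).mono inter_subset_left inter_subset_left
  · exact (h.preimage im).mono inter_subset_right inter_subset_right

theorem dist_lt_of_mem_Ioo_reProdIm_of_mem_Icc_reProdIm {p q r s : ℝ} {z w : ℂ}
    (hz : z ∈ Ioo p q ×ℂ Ioo r s) (hw : w ∈ Icc p q ×ℂ Icc r s) :
    dist z w < (q - p) + (s - r) := by
  obtain ⟨⟨hz₁, hz₂⟩, hz₃, hz₄⟩ := hz
  obtain ⟨⟨hw₁, hw₂⟩, hw₃, hw₄⟩ := hw
  calc dist z w ≤ |(z - w).re| + |(z - w).im| := by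
        rw [dist_eq]; exact norm_le_abs_re_add_abs_im _
    _ < (q - p) + (s - r) := by
        rw [sub_re, sub_im]
        gcongr <;> exact abs_sub_lt_iff.mpr ⟨by linarith, by linarith⟩

end Complex

def gridIoo (a α : ℝ) (u : ℕ) : Set ℝ := Ioo (a + ((u : ℝ) - 1) * α) (a + u * α)

def gridIcc (a α : ℝ) (u : ℕ) : Set ℝ := Icc (a + ((u : ℝ) - 1) * α) (a + u * α)

theorem measurableSet_gridIoo (a α : ℝ) (u : ℕ) : MeasurableSet (gridIoo a α u) :=
  measurableSet_Ioo

theorem volume_gridIoo (a α : ℝ) (u : ℕ) : volume (gridIoo a α u) = ENNReal.ofReal α := by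
  rw [gridIoo, Real.volume_Ioo]; ring_nf

open Function in
theorem pairwise_disjoint_gridIoo (a α : ℝ) : Pairwise (Disjoint on gridIoo a α) := by
  suffices h : ∀ u u' : ℕ, u < u' → Disjoint (gridIoo a α u) (gridIoo a α u') from
    fun u u' hne => hne.lt_or_gt.elim (h u u') fun hlt => (h u' u hlt).symm
  intro u u' hlt
  have hu : (u : ℝ) + 1 ≤ u' := by exact_mod_cast hlt
  rw [gridIoo, gridIoo, Ioo_disjoint_Ioo]
  rcases le_total 0 α with hα | hα
  · exact (min_le_left _ _).trans (le_trans (by nlinarith) (le_max_right _ _))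
  · exact (min_le_left _ _).trans (le_trans (by nlinarith) (le_max_left _ _))

theorem gridIoo_subset_Icc {a α : ℝ} (hα : 0 ≤ α) {n u : ℕ} (hu : 1 ≤ u) (hun : u ≤ n) :
    gridIoo a α u ⊆ Icc a (a + n * α) := by
  have hu' : (1 : ℝ) ≤ u := by exact_mod_cast hu
  have hun' : (u : ℝ) ≤ n := by exact_mod_cast hun
  refine Ioo_subset_Icc_self.trans (Icc_subset_Icc ?_ ?_) <;> nlinarith

theorem dist_lt_of_mem_gridIoo_of_mem_gridIcc {a b α β : ℝ} {u v : ℕ} {z w : ℂ}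
    (hz : z ∈ gridIoo a α u ×ℂ gridIoo b β v) (hw : w ∈ gridIcc a α u ×ℂ gridIcc b β v) :
    dist z w < α + β := by
  simpa only [add_sub_add_left_eq_sub, ← sub_mul, sub_sub_cancel, one_mul] using
    Complex.dist_lt_of_mem_Ioo_reProdIm_of_mem_Icc_reProdIm hz hw

theorem ite_nonempty_inter_ediam_image_le_indicator {X Y : Type*} [PseudoMetricSpace X]
    [PseudoEMetricSpace Y] (φ : X → Y) {η S : Set X} [Decidable (η ∩ S).Nonempty] {z : X} {r : ℝ}
    (hS : ∀ w ∈ S, dist z w < r) :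
    (if (η ∩ S).Nonempty then ediam (φ '' S) else 0) ≤
      indicator {w | infDist w η < r} (fun w => ediam (φ '' ball w r)) z := by
  split_ifs with h
  · obtain ⟨w, hwη, hwS⟩ := h
    have hz : z ∈ {w | infDist w η < r} := (infDist_le_dist_of_mem hwη).trans_lt (hS w hwS)
    rw [indicator_of_mem hz]
    exact ediam_mono (image_mono fun y hy => mem_ball'.mpr (hS y hy))
  · exact zero_le

theorem sum_mul_measure_le_setLIntegral {X ι : Type*} [MeasurableSpace X] {μ : Measure X}
    {I : Finset ι} {s : ι → Set X} {K : Set X} {c : ι → ℝ≥0∞} {f : X → ℝ≥0∞}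
    (hs : ∀ i ∈ I, MeasurableSet (s i)) (hd : (I : Set ι).PairwiseDisjoint s)
    (hK : ∀ i ∈ I, s i ⊆ K) (hc : ∀ i ∈ I, ∀ x ∈ s i, c i ≤ f x) :
    ∑ i ∈ I, c i * μ (s i) ≤ ∫⁻ x in K, f x ∂μ :=
  calc ∑ i ∈ I, c i * μ (s i) = ∑ i ∈ I, ∫⁻ _ in s i, c i ∂μ := by
        simp only [setLIntegral_const]
    _ ≤ ∑ i ∈ I, ∫⁻ x in s i, f x ∂μ :=
        Finset.sum_le_sum fun i hi => setLIntegral_mono' (hs i hi) (hc i hi)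
    _ = ∫⁻ x in ⋃ i ∈ I, s i, f x ∂μ := (lintegral_biUnion_finset hd hs f).symm
    _ ≤ ∫⁻ x in K, f x ∂μ := lintegral_mono_set (iUnion₂_subset hK)

open Function in
theorem sum_mul_le_setLIntegral_of_le_on_gridIoo {a b α β : ℝ} (hα : 0 ≤ α) (hβ : 0 ≤ β) (n : ℕ)
    {c : ℕ × ℕ → ℝ≥0∞} {f : ℂ → ℝ≥0∞}
    (hc : ∀ p ∈ Finset.Icc 1 n ×ˢ Finset.Icc 1 n, ∀ z ∈ gridIoo a α p.1 ×ℂ gridIoo b β p.2,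
      c p ≤ f z) :
    (∑ p ∈ Finset.Icc 1 n ×ˢ Finset.Icc 1 n, c p) * (ENNReal.ofReal α * ENNReal.ofReal β) ≤
      ∫⁻ z in Icc a (a + n * α) ×ℂ Icc b (b + n * β), f z := by
  have hdisj : Pairwise (Disjoint on fun p : ℕ × ℕ => gridIoo a α p.1 ×ℂ gridIoo b β p.2) :=
    fun p q hpq => Complex.disjoint_reProdIm <| by
      by_cases h : p.1 = q.1
      · exact .inr (pairwise_disjoint_gridIoo b β fun h' => hpq (Prod.ext h h'))
      · exact .inl (pairwise_disjoint_gridIoo a α h)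
  rw [Finset.sum_mul]
  convert sum_mul_measure_le_setLIntegral
    (fun p _ => Complex.measurableSet_reProdIm (measurableSet_gridIoo _ _ _)
      (measurableSet_gridIoo _ _ _)) (hdisj.set_pairwise _) (fun p hp z hz => ?_) hc using 3
  · rw [Complex.volume_reProdIm (measurableSet_gridIoo _ _ _) (measurableSet_gridIoo _ _ _),
      volume_gridIoo, volume_gridIoo]
  · simp only [Finset.mem_product, Finset.mem_Icc] at hp
    exact ⟨gridIoo_subset_Icc hα hp.1.1 hp.1.2 hz.1, gridIoo_subset_Icc hβ hp.2.1 hp.2.2 hz.2⟩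

theorem ENNReal.inv_mul_le_mul_inv_mul_mul {n m S I : ℝ≥0∞} (hn₀ : n ≠ 0) (hn : n ≠ ⊤)
    (hm₀ : m ≠ 0) (hm : m ≠ ⊤) (h : S * m ≤ I) : n⁻¹ * S ≤ n * ((n * n * m)⁻¹ * I) :=
  calc n⁻¹ * S = (n * n⁻¹) * n⁻¹ * (m⁻¹ * m) * S := by
        rw [ENNReal.mul_inv_cancel hn₀ hn, ENNReal.inv_mul_cancel hm₀ hm, one_mul, mul_one]
    _ = n * ((n * n * m)⁻¹ * (S * m)) := by
        rw [ENNReal.mul_inv (.inl (mul_ne_zero hn₀ hn₀)) (.inl (ENNReal.mul_ne_top hn hn)),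
          ENNReal.mul_inv (.inl hn₀) (.inl hn)]
        ring
    _ ≤ n * ((n * n * m)⁻¹ * I) := by gcongr

open scoped Classical ENNReal in
/-- The discretized Riemann-sum bound: with `K = [a₁,a₂]×[b₁,b₂]`
divided into `n × n` rectangles `R_{u,v}` of size `αₙ × βₙ`,
`(1/n) Σ_{u,v} diam(φ(R_{u,v})) 1{η ∩ R_{u,v} ≠ ∅}
  ≤ n · (1/area K) ∫_K diam(φ(B(z, αₙ+βₙ))) 1{dist(z,η) < αₙ+βₙ} dA(z)`. -/
theorem statement11
    (a₁ a₂ b₁ b₂ : ℝ) (ha : a₁ < a₂) (hb : b₁ < b₂)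
    (η : Set ℂ) (φ : ℂ → ℂ) (n : ℕ) (hn : 0 < n)
    (K : Set ℂ) (hK : K = {z : ℂ | z.re ∈ Icc a₁ a₂ ∧ z.im ∈ Icc b₁ b₂})
    (αn βn : ℝ) (hαn : αn = (a₂ - a₁) / n) (hβn : βn = (b₂ - b₁) / n)
    (Rect : ℕ → ℕ → Set ℂ)
    (hRect : ∀ u v : ℕ, Rect u v = {z : ℂ |
        z.re ∈ Icc (a₁ + ((u : ℝ) - 1) * αn) (a₁ + (u : ℝ) * αn) ∧
        z.im ∈ Icc (b₁ + ((v : ℝ) - 1) * βn) (b₁ + (v : ℝ) * βn)}) :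
    (n : ℝ≥0∞)⁻¹ * ∑ u ∈ Finset.Icc 1 n, ∑ v ∈ Finset.Icc 1 n,
        (if (η ∩ Rect u v).Nonempty then EMetric.diam (φ '' Rect u v) else 0)
      ≤ (n : ℝ≥0∞) * ((volume K)⁻¹ *
          ∫⁻ z in K, Set.indicator {w : ℂ | Metric.infDist w η < αn + βn}
            (fun w => EMetric.diam (φ '' ball w (αn + βn))) z) := by
  have hnR : (0 : ℝ) < n := Nat.cast_pos.mpr hn
  have hα : 0 < αn := hαn ▸ div_pos (sub_pos.mpr ha) hnR
  have hβ : 0 < βn := hβn ▸ div_pos (sub_pos.mpr hb) hnR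
  have hK' : K = Icc a₁ (a₁ + n * αn) ×ℂ Icc b₁ (b₁ + n * βn) := by
    rw [hK, hαn, hβn, mul_div_cancel₀ _ hnR.ne', mul_div_cancel₀ _ hnR.ne',
      add_sub_cancel, add_sub_cancel]
    rfl
  have hvolK : volume K = n * n * (ENNReal.ofReal αn * ENNReal.ofReal βn) := by
    rw [hK', Complex.volume_reProdIm measurableSet_Icc measurableSet_Icc, Real.volume_Icc,
      Real.volume_Icc, add_sub_cancel_left, add_sub_cancel_left, ENNReal.ofReal_mul hnR.le,
      ENNReal.ofReal_mul hnR.le, ENNReal.ofReal_natCast]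
    ring
  have hsum := sum_mul_le_setLIntegral_of_le_on_gridIoo hα.le hβ.le n
    (fun p _ z hz => ite_nonempty_inter_ediam_image_le_indicator φ (η := η) (S := Rect p.1 p.2)
      fun w hw => dist_lt_of_mem_gridIoo_of_mem_gridIcc hz (by rwa [hRect] at hw))
  rw [Finset.sum_product, ← hK'] at hsum
  rw [hvolK]
  exact ENNReal.inv_mul_le_mul_inv_mul_mul (by exact_mod_cast hn.ne') (ENNReal.natCast_ne_top n)
    (mul_ne_zero (ENNReal.ofReal_pos.mpr hα).ne' (ENNReal.ofReal_pos.mpr hβ).ne')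
    (ENNReal.mul_ne_top ENNReal.ofReal_ne_top ENNReal.ofReal_ne_top) hsum
end
end
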